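/- Let ω: ℝ → ℝ be continuous with ω(t)/t → 0 as t → ±∞, δ > 0, λ > 0, and β continuous with 0 < β₀ ≤ β ≤ β₁. Define for the transcritical equation the branch x_λ(τ, ω) = (∫_{−∞}^0 e^{λr + δω(r)} β(r+τ) dr)^{−1}. Then for every τ ∈ ℝ and every compact set K ⊂ (0, ∞), the pullback solutions of dx/dt = λx − β(t)x² + δx∘dω/dt, given explicitly by x(τ, τ−t, θ_{−τ}ω, x₀) = x₀ / (e^{−λt + δω(−t)} + x₀ ∫_{−t}^0 e^{λr + δω(r)} β(r+τ) dr), converge uniformly over x₀ ∈ K to x_λ(τ, ω) as t → ∞. -/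

import Mathlib

set_option autoImplicit false

open MeasureTheory Filter Real Set Asymptotics Topology

/-! The pullback solution is `x₀ / (E t + x₀ * J t)` with `E t = exp (-λt + δω(-t))` and `J t` the
truncated integral. Sublinear growth of `ω` at `-∞` gives `λr + δω(r) ≤ λr/2` for `r ≪ 0`, so
`E t → 0` and the integrand is dominated by `exp (λr/2)`, whence `J t` tends to the positive
improper integral `I`. As `(e, j, x) ↦ x / (e + x j)` is continuous on `[0, ∞) × (0, ∞) × K` and `K`
is compact, the convergence `(E t, J t) → (0, I)` yields convergence to `I⁻¹` uniformly on `K`. -/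

theorem ContinuousOn.tendstoUniformlyOn_comp_of_tendsto {α β γ ι : Type*}
    [TopologicalSpace α] [TopologicalSpace β] [UniformSpace γ]
    {F : α → β → γ} {s : Set α} {k : Set β} {q : α} {g : ι → α} {l : Filter ι}
    (hF : ContinuousOn ↿F (s ×ˢ k)) (hk : IsCompact k) (hq : q ∈ s)
    (hg : Tendsto g l (𝓝[s] q)) :
    TendstoUniformlyOn (fun i => F (g i)) (F q) l k := by
  intro u hu
  obtain ⟨v, hv, hvu⟩ := hk.mem_uniformity_of_prod hF hq (symm_le_uniformity hu)
  exact hg.eventually (eventually_of_mem hv fun p hp x hx => hvu p hp x hx)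

theorem tendstoUniformlyOn_div_add_mul {ι : Type*} {l : Filter ι} {E J : ι → ℝ} {I : ℝ}
    {K : Set ℝ} (hK : IsCompact K) (hKpos : K ⊆ Ioi 0) (hE : Tendsto E l (𝓝 0))
    (hE_nonneg : ∀ᶠ i in l, 0 ≤ E i) (hJ : Tendsto J l (𝓝 I)) (hI : 0 < I) :
    TendstoUniformlyOn (fun i x => x / (E i + x * J i)) (fun _ => I⁻¹) l K := by
  let F : ℝ × ℝ → ℝ → ℝ := fun p x => x / (p.1 + x * p.2)
  have hF : ContinuousOn ↿F ((Ici 0 ×ˢ Ioi 0) ×ˢ K) := by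
    refine ContinuousOn.div (by fun_prop) (by fun_prop) ?_
    rintro ⟨⟨e, j⟩, x⟩ ⟨⟨he, hj⟩, hx⟩
    exact (add_pos_of_nonneg_of_pos he (mul_pos (hKpos hx) hj)).ne'
  have hEJ : Tendsto (fun i => (E i, J i)) l (𝓝[Ici 0 ×ˢ Ioi 0] (0, I)) :=
    tendsto_nhdsWithin_iff.2 ⟨hE.prodMk_nhds hJ, hE_nonneg.and (hJ.eventually (lt_mem_nhds hI))⟩
  refine (hF.tendstoUniformlyOn_comp_of_tendsto (q := (0, I)) hK ⟨le_refl (0 : ℝ), hI⟩ hEJ)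
    |>.congr_right fun x hx => ?_
  simpa [F] using div_mul_cancel_left₀ (ne_of_gt (hKpos hx)) I

theorem eventually_mul_add_le_half_mul_atBot {f : ℝ → ℝ} (hf : f =o[atBot] id) {a : ℝ}
    (ha : 0 < a) : ∀ᶠ r in atBot, a * r + f r ≤ a / 2 * r := by
  filter_upwards [hf.def (half_pos ha), eventually_le_atBot 0] with r hfr hr
  rw [norm_eq_abs, id, norm_eq_abs, abs_of_nonpos hr] at hfr
  linarith [le_abs_self (f r)]

theorem integrableOn_Iic_exp_mul {φ b : ℝ → ℝ} {a C : ℝ} (hφ : Continuous φ) (hb : Continuous b)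
    (ha : 0 < a) (hφa : ∀ᶠ r in atBot, φ r ≤ a * r) (hbC : ∀ r, |b r| ≤ C) (c : ℝ) :
    IntegrableOn (fun r => exp (φ r) * b r) (Iic c) := by
  refine ((by fun_prop : Continuous fun r => exp (φ r) * b r).locallyIntegrable.locallyIntegrableOn
    _).integrableOn_of_isBigO_atBot (g := fun r => exp (a * r)) ?_
    ⟨Iic 0, Iic_mem_atBot 0, integrableOn_exp_mul_Iic ha 0⟩
  refine IsBigO.of_bound C (hφa.mono fun r hr => ?_)
  rw [norm_mul, norm_eq_abs, norm_eq_abs, norm_eq_abs, abs_exp, abs_exp, mul_comm]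
  exact mul_le_mul (hbC r) (exp_le_exp.2 hr) (exp_pos _).le ((abs_nonneg _).trans (hbC r))

theorem setIntegral_pos_of_forall_pos {f : ℝ → ℝ} {s : Set ℝ}
    (hvol : volume s ≠ 0) (hf : IntegrableOn f s) (hpos : ∀ r, 0 < f r) :
    0 < ∫ r in s, f r := by
  rw [setIntegral_pos_iff_support_of_nonneg_ae (Eventually.of_forall fun r => (hpos r).le) hf,
    Function.support_eq_univ fun r => (hpos r).ne', univ_inter]
  exact pos_iff_ne_zero.2 hvol

theorem tendsto_setIntegral_Ioc_neg_atTop {f : ℝ → ℝ} {c : ℝ} (hf : IntegrableOn f (Iic c)) :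
    Tendsto (fun t => ∫ r in Ioc (-t) c, f r) atTop (𝓝 (∫ r in Iic c, f r)) := by
  refine (intervalIntegral_tendsto_integral_Iic c hf tendsto_neg_atTop_atBot).congr' ?_
  filter_upwards [eventually_ge_atTop (-c)] with t ht
  rw [intervalIntegral.integral_of_le (by linarith)]

theorem stmt18_general
    (ω : ℝ → ℝ) (hωc : Continuous ω)
    (hωbot : Tendsto (fun t => ω t / t) atBot (nhds 0))
    (lam δ β₀ β₁ : ℝ) (hlam : 0 < lam)
    (β : ℝ → ℝ) (hβc : Continuous β)
    (hβ₀ : 0 < β₀) (hβl : ∀ t, β₀ ≤ β t) (hβu : ∀ t, β t ≤ β₁)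
    (τ : ℝ) (K : Set ℝ) (hK : IsCompact K) (hKpos : K ⊆ Ioi 0) :
    TendstoUniformlyOn
      (fun (t : ℝ) (x₀ : ℝ) =>
        x₀ / (Real.exp (-lam * t + δ * ω (-t)) +
          x₀ * ∫ r in Ioc (-t) (0 : ℝ), Real.exp (lam * r + δ * ω r) * β (r + τ)))
      (fun _ => (∫ r in Iic (0 : ℝ), Real.exp (lam * r + δ * ω r) * β (r + τ))⁻¹)
      atTop K := by
  have hω : (fun r => δ * ω r) =o[atBot] id :=
    ((isLittleO_iff_tendsto' ((eventually_ne_atBot 0).mono fun r hr h => absurd h hr)).2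
      hωbot).const_mul_left δ
  have hexponent := eventually_mul_add_le_half_mul_atBot hω hlam
  have hβpos : ∀ r, 0 < β r := fun r => hβ₀.trans_le (hβl r)
  have hint : IntegrableOn (fun r => exp (lam * r + δ * ω r) * β (r + τ)) (Iic 0) :=
    integrableOn_Iic_exp_mul (by fun_prop) (by fun_prop) (half_pos hlam) hexponent
      (fun r => (abs_of_pos (hβpos _)).trans_le (hβu _)) 0
  have hE : Tendsto (fun t => exp (-lam * t + δ * ω (-t))) atTop (𝓝 0) := by
    have : Tendsto (fun r => lam * r + δ * ω r) atBot atBot :=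
      tendsto_atBot_mono' _ hexponent (tendsto_id.const_mul_atBot (half_pos hlam))
    refine tendsto_exp_atBot.comp ?_
    simpa [Function.comp_def] using this.comp tendsto_neg_atTop_atBot
  exact tendstoUniformlyOn_div_add_mul hK hKpos hE (.of_forall fun _ => (exp_pos _).le)
    (tendsto_setIntegral_Ioc_neg_atTop hint)
    (setIntegral_pos_of_forall_pos (by simp [Real.volume_Iic]) hint
      fun r => mul_pos (exp_pos _) (hβpos _))

/-- Transcritical equation, λ > 0: the pullback solutions converge uniformly
over compact sets of positive initial data to the branch
x_λ(τ,ω) = (∫_{-∞}^0 e^{λr+δω(r)} β(r+τ) dr)⁻¹. -/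
theorem stmt18
    (ω : ℝ → ℝ) (hωc : Continuous ω)
    (hωtop : Tendsto (fun t => ω t / t) atTop (nhds 0))
    (hωbot : Tendsto (fun t => ω t / t) atBot (nhds 0))
    (lam δ β₀ β₁ : ℝ) (hlam : 0 < lam) (hδ : 0 < δ)
    (β : ℝ → ℝ) (hβc : Continuous β)
    (hβ₀ : 0 < β₀) (hβl : ∀ t, β₀ ≤ β t) (hβu : ∀ t, β t ≤ β₁)
    (τ : ℝ) (K : Set ℝ) (hK : IsCompact K) (hKpos : K ⊆ Ioi 0) :
    TendstoUniformlyOn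
      (fun (t : ℝ) (x₀ : ℝ) =>
        x₀ / (Real.exp (-lam * t + δ * ω (-t)) +
          x₀ * ∫ r in Ioc (-t) (0 : ℝ), Real.exp (lam * r + δ * ω r) * β (r + τ)))
      (fun _ => (∫ r in Iic (0 : ℝ), Real.exp (lam * r + δ * ω r) * β (r + τ))⁻¹)
      atTop K :=
  stmt18_general ω hωc hωbot lam δ β₀ β₁ hlam β hβc hβ₀ hβl hβu τ K hK hKpos
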